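/- For any θ ∈ [0,1] and κ > 0, the function k(x, x') = cosh((|x - x'| - 1/2)/κ) / cosh(1/(2κ)), where |x - x'| denotes the distance on the circle ℝ/ℤ (i.e., min(|x-x'|, 1-|x-x'|) for representatives in [0,1)), has Fourier coefficients ρ(n) = (2 sinh(1/(2κ)) / (κ cosh(1/(2κ)))) · (1/κ² + 4π²n²)^{-1} for n ∈ ℤ; in particular all coefficients are nonnegative, so k is positive semi-definite on the circle. -/

import Mathlib

/-!
On `[0, 1]` the kernel equals `cosh ((t - 1/2)/κ) / cosh (1/(2κ))`, and
`cosh (a (t - 1/2)) e^{bt}` has an explicit antiderivative; since `e^{-2πin} = 1` the boundary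
terms give `ρ(n)`, a positive multiple of `(κ⁻² + 4π²n²)⁻¹`. These coefficients are `O(n⁻²)`, so the
Fourier series of the kernel converges absolutely and pointwise, and
`∑ᵢⱼ cᵢ c̄ⱼ k(xᵢ - xⱼ) = ∑ₙ ρ(n) |∑ᵢ cᵢ eₙ(xᵢ)|² ≥ 0`.
-/

open Real Complex ComplexConjugate

theorem fourier_sub_eq_mul_conj {T : ℝ} (n : ℤ) (x y : AddCircle T) :
    fourier n (x - y) = fourier n x * conj (fourier n y) := by
  simp [sub_eq_add_neg, AddCircle.toCircle_add]

open scoped ComplexOrder in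
theorem sum_sum_mul_conj_nonneg_of_fourierCoeff_nonneg {T : ℝ} [Fact (0 < T)]
    (f : C(AddCircle T, ℂ)) (hsum : Summable (fourierCoeff f)) (hf : ∀ n, 0 ≤ fourierCoeff f n)
    {ι : Type*} [Fintype ι] (x : ι → AddCircle T) (c : ι → ℂ) :
    0 ≤ ∑ i, ∑ j, c i * conj (c j) * f (x i - x j) := by
  let S : ℤ → ℂ := fun n => ∑ i, c i * fourier n (x i)
  have hterm (n : ℤ) : ∑ i, ∑ j, c i * conj (c j) * (fourierCoeff f n • fourier n (x i - x j)) =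
      fourierCoeff f n * (S n * conj (S n)) := by
    simp only [S, map_sum, map_mul, smul_eq_mul, fourier_sub_eq_mul_conj]
    rw [Finset.sum_mul_sum, Finset.mul_sum]
    refine Finset.sum_congr rfl fun i _ => ?_
    rw [Finset.mul_sum]
    refine Finset.sum_congr rfl fun j _ => ?_
    ring
  have hS : HasSum (fun n => fourierCoeff f n * (S n * conj (S n)))
      (∑ i, ∑ j, c i * conj (c j) * f (x i - x j)) := by
    simp only [← hterm]
    exact hasSum_sum fun i _ => hasSum_sum fun j _ =>
      (has_pointwise_sum_fourier_series_of_summable hsum _).mul_left _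
  exact hS.nonneg fun n => mul_nonneg (hf n) (mul_star_self_nonneg _)

theorem integral_cosh_mul_exp_of_exp_eq_one {a b : ℂ} (hab : a ^ 2 ≠ b ^ 2) (hb : exp b = 1) :
    ∫ t in (0:ℝ)..1, cosh (a * (t - 1 / 2)) * exp (b * t) =
      2 * a * sinh (a / 2) / (a ^ 2 - b ^ 2) := by
  have hab' : b ^ 2 - a ^ 2 ≠ 0 := sub_ne_zero.2 hab.symm
  let F : ℂ → ℂ := fun w =>
    exp (b * w) * (b * cosh (a * (w - 1 / 2)) - a * sinh (a * (w - 1 / 2))) / (b ^ 2 - a ^ 2)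
  have hF (t : ℝ) :
      HasDerivAt (fun t : ℝ => F t) (cosh (a * (t - 1 / 2)) * exp (b * t)) t := by
    have hlin : HasDerivAt (fun w : ℂ => a * (w - 1 / 2)) a t := by
      simpa only [mul_one] using ((hasDerivAt_id' (t : ℂ)).sub_const (1 / 2)).const_mul a
    have hexp : HasDerivAt (fun w : ℂ => exp (b * w)) (exp (b * t) * b) t := by
      simpa only [mul_one] using ((hasDerivAt_id' (t : ℂ)).const_mul b).cexp
    refine (((hexp.mul ((hlin.ccosh.const_mul b).sub (hlin.csinh.const_mul a))).div_const
      (b ^ 2 - a ^ 2)).comp_ofReal).congr_deriv ?_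
    simp only [Pi.sub_apply]
    field_simp
    ring
  rw [intervalIntegral.integral_eq_sub_of_hasDerivAt (fun t _ => hF t)
    (Continuous.intervalIntegrable (by fun_prop) _ _)]
  simp only [F, ofReal_one, ofReal_zero, mul_one, mul_zero, hb, Complex.exp_zero, one_mul]
  rw [show a * (0 - 1 / 2) = -(a / 2) by ring, show a * (1 - 1 / 2) = a / 2 by ring,
    Complex.cosh_neg, Complex.sinh_neg, show a ^ 2 - b ^ 2 = -(b ^ 2 - a ^ 2) by ring]
  field_simp
  ring

theorem summable_inv_add_mul_sq {a b : ℝ} (ha : 0 ≤ a) (hb : 0 < b) :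
    Summable fun n : ℤ => (a + b * (n : ℝ) ^ 2)⁻¹ := by
  refine Summable.of_norm_bounded_eventually
    ((summable_one_div_int_pow.2 one_lt_two).mul_left b⁻¹) ?_
  filter_upwards [Filter.eventually_cofinite_ne 0] with n hn
  have hn : 0 < b * (n : ℝ) ^ 2 := by positivity
  rw [Real.norm_of_nonneg (by positivity), one_div, ← mul_inv]
  exact inv_anti₀ hn (le_add_of_nonneg_left ha)

noncomputable def maternCoeff (κ : ℝ) (n : ℤ) : ℝ :=
  2 * Real.sinh (1 / (2 * κ)) / (κ * Real.cosh (1 / (2 * κ))) *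
    (1 / κ ^ 2 + 4 * π ^ 2 * (n : ℝ) ^ 2)⁻¹

theorem maternCoeff_nonneg (κ : ℝ) (n : ℤ) : 0 ≤ maternCoeff κ n := by
  refine mul_nonneg ?_ (by positivity)
  rcases le_total κ 0 with hκ | hκ
  · refine div_nonneg_of_nonpos ?_ (mul_nonpos_of_nonpos_of_nonneg hκ (cosh_pos _).le)
    have : 1 / (2 * κ) ≤ 0 := by
      rw [one_div_nonpos]; linarith
    linarith [Real.sinh_nonpos_iff.2 this]
  · have : 0 ≤ Real.sinh (1 / (2 * κ)) := Real.sinh_nonneg_iff.2 (by positivity)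
    positivity

theorem summable_maternCoeff (κ : ℝ) : Summable (maternCoeff κ) :=
  (summable_inv_add_mul_sq (by positivity) (by positivity)).mul_left _

theorem cosh_min_one_sub_sub_half_div (κ t : ℝ) :
    Real.cosh ((min t (1 - t) - 1 / 2) / κ) = Real.cosh ((t - 1 / 2) / κ) := by
  rcases le_total t (1 / 2) with h | h
  · rw [min_eq_left (by linarith)]
  · rw [min_eq_right (by linarith), ← Real.cosh_neg]
    ring_nf

theorem integral_cosh_sub_half_div_mul_exp {κ : ℝ} (hκ : κ ≠ 0) (n : ℤ) :
    ∫ t in (0:ℝ)..1, (Real.cosh ((t - 1 / 2) / κ) : ℂ) * exp (-2 * π * I * n * t) =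
      ((2 * Real.sinh (1 / (2 * κ)) / κ * (1 / κ ^ 2 + 4 * π ^ 2 * (n : ℝ) ^ 2)⁻¹ : ℝ) : ℂ) := by
  have hD : ((1 / κ : ℝ) : ℂ) ^ 2 - (-2 * π * I * n) ^ 2 =
      ((1 / κ ^ 2 + 4 * π ^ 2 * (n : ℝ) ^ 2 : ℝ) : ℂ) := by
    push_cast; ring_nf; rw [I_sq]; ring
  have hpos : 0 < 1 / κ ^ 2 + 4 * π ^ 2 * (n : ℝ) ^ 2 := by positivity
  have hexp : exp (-2 * π * I * n) = 1 := by
    rw [show -2 * π * I * n = ((-n : ℤ) : ℂ) * (2 * π * I) by push_cast; ring]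
    exact exp_int_mul_two_pi_mul_I _
  have key := integral_cosh_mul_exp_of_exp_eq_one
    (sub_ne_zero.1 (hD ▸ ofReal_ne_zero.2 hpos.ne')) hexp
  rw [hD] at key
  convert key using 1
  · congr 1 with t
    push_cast
    ring_nf
  · push_cast
    ring_nf

theorem integral_matern_mul_exp {κ : ℝ} (hκ : κ ≠ 0) (n : ℤ) :
    ∫ t in (0:ℝ)..1, (Real.cosh ((min t (1 - t) - 1 / 2) / κ) / Real.cosh (1 / (2 * κ)) : ℂ) *
      exp (-2 * π * I * n * t) = (maternCoeff κ n : ℂ) := by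
  simp_rw [cosh_min_one_sub_sub_half_div, div_mul_eq_mul_div, intervalIntegral.integral_div,
    integral_cosh_sub_half_div_mul_exp hκ, maternCoeff]
  push_cast
  field_simp

-- `‖z‖` is the distance from `z` to `0` on `ℝ/ℤ`.
noncomputable def maternKernel (κ : ℝ) : C(UnitAddCircle, ℂ) :=
  ⟨fun z => (Real.cosh ((‖z‖ - 1 / 2) / κ) / Real.cosh (1 / (2 * κ)) : ℝ), by fun_prop⟩

theorem maternKernel_coe (κ u : ℝ) :
    maternKernel κ u =
      (Real.cosh ((min (Int.fract u) (1 - Int.fract u) - 1 / 2) / κ) / Real.cosh (1 / (2 * κ)) :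
        ℝ) := by
  simp only [maternKernel, ContinuousMap.coe_mk, UnitAddCircle.norm_eq, abs_sub_round_eq_min]

theorem min_fract_one_sub_fract_of_mem_Icc {t : ℝ} (ht : t ∈ Set.Icc (0:ℝ) 1) :
    min (Int.fract t) (1 - Int.fract t) = min t (1 - t) := by
  rcases ht.2.lt_or_eq with h | rfl
  · rw [Int.fract_eq_self.2 ⟨ht.1, h⟩]
  · simp

theorem fourierCoeff_maternKernel {κ : ℝ} (hκ : κ ≠ 0) (n : ℤ) :
    fourierCoeff (maternKernel κ) n = maternCoeff κ n := by
  rw [fourierCoeff_eq_intervalIntegral _ n 0, zero_add, div_one, one_smul,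
    ← integral_matern_mul_exp hκ n]
  refine intervalIntegral.integral_congr fun t ht => ?_
  rw [Set.uIcc_of_le zero_le_one] at ht
  simp only [smul_eq_mul, fourier_coe_apply, maternKernel_coe,
    min_fract_one_sub_fract_of_mem_Icc ht]
  push_cast
  ring_nf

/-- The Matérn-1/2 kernel on the circle `ℝ/ℤ`:
`k(t) = cosh((dist - 1/2)/κ) / cosh(1/(2κ))` where `dist = min(t, 1-t)` for `t ∈ [0,1)`
is the circle distance. Its Fourier coefficients are
`ρ(n) = (2 sinh(1/(2κ)) / (κ cosh(1/(2κ)))) (1/κ² + 4π²n²)⁻¹ ≥ 0`, and `k` is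
positive semi-definite on the circle. -/
theorem matern_half_circle_fourier_and_psd (κ : ℝ) (hκ : 0 < κ) :
    (∀ n : ℤ,
      (∫ t in (0:ℝ)..1,
          (Real.cosh ((min t (1 - t) - 1/2) / κ) / Real.cosh (1/(2*κ)) : ℂ) *
            Complex.exp (-2 * Real.pi * Complex.I * (n : ℂ) * (t : ℂ)))
        = ((2 * Real.sinh (1/(2*κ)) / (κ * Real.cosh (1/(2*κ)))) *
            (1/κ^2 + 4 * Real.pi^2 * (n:ℝ)^2)⁻¹ : ℝ)) ∧
    (∀ n : ℤ, 0 ≤ (2 * Real.sinh (1/(2*κ)) / (κ * Real.cosh (1/(2*κ)))) *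
        (1/κ^2 + 4 * Real.pi^2 * (n:ℝ)^2)⁻¹) ∧
    (∀ (m : ℕ) (x : Fin m → ℝ) (c : Fin m → ℝ),
      0 ≤ ∑ i, ∑ j, c i * c j *
        (Real.cosh ((min (Int.fract (x i - x j)) (1 - Int.fract (x i - x j)) - 1/2) / κ) /
          Real.cosh (1/(2*κ)))) := by
  refine ⟨integral_matern_mul_exp hκ.ne', maternCoeff_nonneg κ, fun m x c => ?_⟩
  have hcoeff := fourierCoeff_maternKernel hκ.ne'
  have hpsd := sum_sum_mul_conj_nonneg_of_fourierCoeff_nonneg (maternKernel κ)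
    (by rw [funext hcoeff]; exact summable_ofReal.2 (summable_maternCoeff κ))
    (fun n => by simpa only [hcoeff] using zero_le_real.2 (maternCoeff_nonneg κ n))
    (fun i => (x i : UnitAddCircle)) (fun i => (c i : ℂ))
  simp only [← AddCircle.coe_sub, maternKernel_coe, conj_ofReal] at hpsd
  exact_mod_cast hpsd
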